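/- arXiv:2111.07261 — 2 statements merged into one kernel-verified Lean document; each statement's English description precedes it below -/
import Mathlib

section
/- Reformulation of the Euler–Lagrange equation as a geometric wave equation (Proposition 2.1). Suppose φ is smooth, g > 0 and g̊ > 0 everywhere, and φ satisfies the Euler–Lagrange equation ∂_u(∂_ūφ·g^{−1/2}) + ∂_ū((∂_uφ + Ψ'(u) − (Ψ'(u))²·∂_ūφ)·g^{−1/2}) = 0. Then at every point Box_g φ = S₀, where S₀ := (g̊/g²)·(1−g)·(Ψ'(u))²·∂_ū²φ + (1/g²)·(g̊−g)·Ψ'(u)·∂_uφ·∂_ū²φ − (g̊/g²)·(Ψ'(u))³·∂_ūφ·∂_ū²φ + (g̊/g²)·Ψ'(u)·∂_ūφ·∂_ū∂_uφ + (2(g̊−1)/g)·∂_u∂_ūφ + (1/g)·Ψ'(u)·∂_ūφ·∂_u∂_ūφ + (1/g)·Ψ''(u)·(∂_ūφ)² − (g̊/√g)·(Ψ'(u))²·∂_ūφ·∂_ū(g^{−1/2}) + ((g̊−1)/√g)·∂_ūφ·∂_u(g^{−1/2}) + ((g̊−1)/√g)·∂_uφ·∂_ū(g^{−1/2}) + (1/√g)·Ψ'(u)·(∂_ūφ)²·∂_u(g^{−1/2})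 − (1/√g)·Ψ'(u)·∂_ūφ·∂_uφ·∂_ū(g^{−1/2}). -/
noncomputable section

/-- partial derivative in the first variable (`∂_u`) -/
def pd1 (f : ℝ × ℝ → ℝ) (p : ℝ × ℝ) : ℝ := deriv (fun s => f (s, p.2)) p.1

/-- partial derivative in the second variable (`∂_ū`) -/
def pd2 (f : ℝ × ℝ → ℝ) (p : ℝ × ℝ) : ℝ := deriv (fun s => f (p.1, s)) p.2

/-- the determinant `g = 1 − 2∂_uφ∂_ūφ − 2Ψ'(u)∂_ūφ + (Ψ'(u))²(∂_ūφ)²` -/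
def gmet (Ψ : ℝ → ℝ) (φ : ℝ × ℝ → ℝ) (p : ℝ × ℝ) : ℝ :=
  1 - 2 * pd1 φ p * pd2 φ p - 2 * deriv Ψ p.1 * pd2 φ p
    + (deriv Ψ p.1)^2 * (pd2 φ p)^2

/-- the linear-truncation determinant `g̊ = (1 − Ψ'(u)∂_ūφ)²` -/
def gring (Ψ : ℝ → ℝ) (φ : ℝ × ℝ → ℝ) (p : ℝ × ℝ) : ℝ :=
  (1 - deriv Ψ p.1 * pd2 φ p)^2

/-- inverse metric component `g^{uu} = −(∂_ūφ)²/g` -/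
def guu (Ψ : ℝ → ℝ) (φ : ℝ × ℝ → ℝ) (p : ℝ × ℝ) : ℝ :=
  -(pd2 φ p)^2 / gmet Ψ φ p

/-- inverse metric component `g^{uū} = g^{ūu} = (−1 + Ψ'(u)∂_ūφ + ∂_uφ∂_ūφ)/g` -/
def guub (Ψ : ℝ → ℝ) (φ : ℝ × ℝ → ℝ) (p : ℝ × ℝ) : ℝ :=
  (-1 + deriv Ψ p.1 * pd2 φ p + pd1 φ p * pd2 φ p) / gmet Ψ φ p

/-- inverse metric component `g^{ūū} = −(2Ψ'(u) + ∂_uφ)∂_uφ/g` -/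
def gubub (Ψ : ℝ → ℝ) (φ : ℝ × ℝ → ℝ) (p : ℝ × ℝ) : ℝ :=
  -((2 * deriv Ψ p.1 + pd1 φ p) * pd1 φ p) / gmet Ψ φ p

/-- `g^{−1/2}` as a function of the point -/
def invSqrtg (Ψ : ℝ → ℝ) (φ : ℝ × ℝ → ℝ) (p : ℝ × ℝ) : ℝ :=
  (Real.sqrt (gmet Ψ φ p))⁻¹

/-- the Euler–Lagrange expression
`∂_u(∂_ūφ·g^{−1/2}) + ∂_ū((∂_uφ + Ψ'(u) − (Ψ'(u))²∂_ūφ)·g^{−1/2})` -/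
def ELexpr (Ψ : ℝ → ℝ) (φ : ℝ × ℝ → ℝ) (p : ℝ × ℝ) : ℝ :=
  pd1 (fun q => pd2 φ q * invSqrtg Ψ φ q) p
  + pd2 (fun q => (pd1 φ q + deriv Ψ q.1 - (deriv Ψ q.1)^2 * pd2 φ q) * invSqrtg Ψ φ q) p

/-- the Laplace–Beltrami operator `□_g φ` -/
def BoxG (Ψ : ℝ → ℝ) (φ : ℝ × ℝ → ℝ) (p : ℝ × ℝ) : ℝ :=
  invSqrtg Ψ φ p *
    (pd1 (fun q => Real.sqrt (gmet Ψ φ q) * (guu Ψ φ q * pd1 φ q + guub Ψ φ q * pd2 φ q)) p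
     + pd2 (fun q => Real.sqrt (gmet Ψ φ q) * (guub Ψ φ q * pd1 φ q + gubub Ψ φ q * pd2 φ q)) p)

/-- the source term `S₀(∂²φ,∂φ)` of Proposition 2.1 -/
def S0expr (Ψ : ℝ → ℝ) (φ : ℝ × ℝ → ℝ) (p : ℝ × ℝ) : ℝ :=
  (gring Ψ φ p / (gmet Ψ φ p)^2) * (1 - gmet Ψ φ p) * (deriv Ψ p.1)^2 * pd2 (pd2 φ) p
  + (1 / (gmet Ψ φ p)^2) * (gring Ψ φ p - gmet Ψ φ p) * deriv Ψ p.1 * pd1 φ p * pd2 (pd2 φ) p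
  - (gring Ψ φ p / (gmet Ψ φ p)^2) * (deriv Ψ p.1)^3 * pd2 φ p * pd2 (pd2 φ) p
  + (gring Ψ φ p / (gmet Ψ φ p)^2) * deriv Ψ p.1 * pd2 φ p * pd2 (pd1 φ) p
  + (2 * (gring Ψ φ p - 1) / gmet Ψ φ p) * pd1 (pd2 φ) p
  + (1 / gmet Ψ φ p) * deriv Ψ p.1 * pd2 φ p * pd1 (pd2 φ) p
  + (1 / gmet Ψ φ p) * deriv (deriv Ψ) p.1 * (pd2 φ p)^2
  - (gring Ψ φ p / Real.sqrt (gmet Ψ φ p)) * (deriv Ψ p.1)^2 * pd2 φ p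
      * pd2 (invSqrtg Ψ φ) p
  + ((gring Ψ φ p - 1) / Real.sqrt (gmet Ψ φ p)) * pd2 φ p * pd1 (invSqrtg Ψ φ) p
  + ((gring Ψ φ p - 1) / Real.sqrt (gmet Ψ φ p)) * pd1 φ p * pd2 (invSqrtg Ψ φ) p
  + (1 / Real.sqrt (gmet Ψ φ p)) * deriv Ψ p.1 * (pd2 φ p)^2 * pd1 (invSqrtg Ψ φ) p
  - (1 / Real.sqrt (gmet Ψ φ p)) * deriv Ψ p.1 * pd2 φ p * pd1 φ p * pd2 (invSqrtg Ψ φ) p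

/-- the alternative source term `S̃₀(∂²φ,∂φ)` of Proposition A.1 -/
def S0tilde (Ψ : ℝ → ℝ) (φ : ℝ × ℝ → ℝ) (p : ℝ × ℝ) : ℝ :=
  (1 / (gmet Ψ φ p)^2) * (1 - gmet Ψ φ p) * (deriv Ψ p.1)^2 * pd2 (pd2 φ) p
  + (1 / (gmet Ψ φ p)^2) * (1 - gmet Ψ φ p) * deriv Ψ p.1 * pd1 φ p * pd2 (pd2 φ) p
  - (1 / (gmet Ψ φ p)^2) * (deriv Ψ p.1)^3 * pd2 φ p * pd2 (pd2 φ) p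
  + (1 / (gmet Ψ φ p)^2) * deriv Ψ p.1 * pd2 φ p * pd2 (pd1 φ) p
  + (1 / gmet Ψ φ p) * deriv Ψ p.1 * pd2 φ p * pd1 (pd2 φ) p
  - (1 / Real.sqrt (gmet Ψ φ p)) * (deriv Ψ p.1)^2 * pd2 φ p * pd2 (invSqrtg Ψ φ) p
  + (1 / gmet Ψ φ p) * deriv (deriv Ψ) p.1 * (pd2 φ p)^2
  + (1 / Real.sqrt (gmet Ψ φ p)) * deriv Ψ p.1 * (pd2 φ p)^2 * pd1 (invSqrtg Ψ φ) p
  - (1 / Real.sqrt (gmet Ψ φ p)) * deriv Ψ p.1 * pd2 φ p * pd1 φ p * pd2 (invSqrtg Ψ φ) p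

/-! Both `□_g φ` and the Euler–Lagrange expression are divergences of `g^{-1/2}` times polynomials
in `∂φ` and `Ψ'`: in `√g (g^{uu} ∂_uφ + g^{uū} ∂_ūφ)` the `∂_uφ (∂_ūφ)²` terms cancel, and in
`√g (g^{ūu} ∂_uφ + g^{ūū} ∂_ūφ)` the `(∂_uφ)² ∂_ūφ` terms. Expanding both divergences by the
product rule, with `∂(g^{-1/2}) = -½ g^{-3/2} ∂g` and symmetry of mixed partials, gives the
pointwise identity `□_g φ + g̊ g^{-1/2} EL = S₀`, an identity of rational functions in `√g` and the
first and second derivatives of `φ` and `Ψ`. -/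

section PartialDerivatives

variable {f : ℝ × ℝ → ℝ}

theorem hasDerivAt_fst_slice_fderiv {x y : ℝ} (hf : DifferentiableAt ℝ f (x, y)) :
    HasDerivAt (fun s => f (s, y)) (fderiv ℝ f (x, y) (1, 0)) x :=
  hf.hasFDerivAt.comp_hasDerivAt x ((hasDerivAt_id x).prodMk (hasDerivAt_const x y))

theorem hasDerivAt_snd_slice_fderiv {x y : ℝ} (hf : DifferentiableAt ℝ f (x, y)) :
    HasDerivAt (fun t => f (x, t)) (fderiv ℝ f (x, y) (0, 1)) y :=
  hf.hasFDerivAt.comp_hasDerivAt y ((hasDerivAt_const y x).prodMk (hasDerivAt_id y))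

theorem pd1_eq_fderiv {p : ℝ × ℝ} (hf : DifferentiableAt ℝ f p) :
    pd1 f p = fderiv ℝ f p (1, 0) :=
  (hasDerivAt_fst_slice_fderiv hf).deriv

theorem pd2_eq_fderiv {p : ℝ × ℝ} (hf : DifferentiableAt ℝ f p) :
    pd2 f p = fderiv ℝ f p (0, 1) :=
  (hasDerivAt_snd_slice_fderiv hf).deriv

theorem hasDerivAt_pd1 {x y : ℝ} (hf : DifferentiableAt ℝ f (x, y)) :
    HasDerivAt (fun s => f (s, y)) (pd1 f (x, y)) x :=
  pd1_eq_fderiv hf ▸ hasDerivAt_fst_slice_fderiv hf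

theorem hasDerivAt_pd2 {x y : ℝ} (hf : DifferentiableAt ℝ f (x, y)) :
    HasDerivAt (fun t => f (x, t)) (pd2 f (x, y)) y :=
  pd2_eq_fderiv hf ▸ hasDerivAt_snd_slice_fderiv hf

theorem pd1_eq_fderiv_apply (hf : Differentiable ℝ f) :
    pd1 f = fun p => fderiv ℝ f p (1, 0) :=
  funext fun p => pd1_eq_fderiv (hf p)

theorem pd2_eq_fderiv_apply (hf : Differentiable ℝ f) :
    pd2 f = fun p => fderiv ℝ f p (0, 1) :=
  funext fun p => pd2_eq_fderiv (hf p)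

theorem contDiff_pd1 {m n : WithTop ℕ∞} (hf : ContDiff ℝ n f) (hmn : m + 1 ≤ n) :
    ContDiff ℝ m (pd1 f) := by
  rw [pd1_eq_fderiv_apply ((hf.of_le (le_add_self.trans hmn)).differentiable one_ne_zero)]
  exact (hf.fderiv_right hmn).clm_apply contDiff_const

theorem contDiff_pd2 {m n : WithTop ℕ∞} (hf : ContDiff ℝ n f) (hmn : m + 1 ≤ n) :
    ContDiff ℝ m (pd2 f) := by
  rw [pd2_eq_fderiv_apply ((hf.of_le (le_add_self.trans hmn)).differentiable one_ne_zero)]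
  exact (hf.fderiv_right hmn).clm_apply contDiff_const

theorem pd2_pd1_comm (hf : ContDiff ℝ 2 f) (p : ℝ × ℝ) : pd2 (pd1 f) p = pd1 (pd2 f) p := by
  have hdf : Differentiable ℝ f := hf.differentiable (by norm_num)
  have hdf' : Differentiable ℝ (fderiv ℝ f) :=
    (hf.fderiv_right (m := 1) le_rfl).differentiable one_ne_zero
  rw [pd1_eq_fderiv_apply hdf, pd2_eq_fderiv_apply hdf,
    pd2_eq_fderiv ((hdf' p).clm_apply (differentiableAt_const _)),
    pd1_eq_fderiv ((hdf' p).clm_apply (differentiableAt_const _)),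
    fderiv_clm_apply (hdf' p) (differentiableAt_const _),
    fderiv_clm_apply (hdf' p) (differentiableAt_const _)]
  simpa using (hf.contDiffAt.isSymmSndFDerivAt (by simp)).eq (0, 1) (1, 0)

theorem differentiable_pd1 (hf : ContDiff ℝ 2 f) : Differentiable ℝ (pd1 f) :=
  (contDiff_pd1 (m := 1) hf le_rfl).differentiable one_ne_zero

theorem differentiable_pd2 (hf : ContDiff ℝ 2 f) : Differentiable ℝ (pd2 f) :=
  (contDiff_pd2 (m := 1) hf le_rfl).differentiable one_ne_zero

end PartialDerivatives

theorem HasDerivAt.sqrt_inv {f : ℝ → ℝ} {f' x : ℝ} (hf : HasDerivAt f f' x) (hx : 0 < f x) :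
    HasDerivAt (fun y => (√(f y))⁻¹) (-f' / (2 * f x * √(f x))) x := by
  have hs : 0 < √(f x) := Real.sqrt_pos.2 hx
  refine ((hf.sqrt hx.ne').inv hs.ne').congr_deriv ?_
  rw [Real.sq_sqrt hx.le]
  field_simp

section Metric

variable {Ψ : ℝ → ℝ} {φ : ℝ × ℝ → ℝ}

theorem sqrt_gmet_mul_guu_add_guub {q : ℝ × ℝ} (hg : 0 < gmet Ψ φ q) :
    √(gmet Ψ φ q) * (guu Ψ φ q * pd1 φ q + guub Ψ φ q * pd2 φ q) =
      (-pd2 φ q + deriv Ψ q.1 * pd2 φ q ^ 2) * invSqrtg Ψ φ q := by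
  have hs : 0 < √(gmet Ψ φ q) := Real.sqrt_pos.2 hg
  rw [guu, guub, invSqrtg]
  field_simp
  rw [Real.sq_sqrt hg.le]
  ring

theorem sqrt_gmet_mul_guub_add_gubub {q : ℝ × ℝ} (hg : 0 < gmet Ψ φ q) :
    √(gmet Ψ φ q) * (guub Ψ φ q * pd1 φ q + gubub Ψ φ q * pd2 φ q) =
      (-pd1 φ q - deriv Ψ q.1 * pd1 φ q * pd2 φ q) * invSqrtg Ψ φ q := by
  have hs : 0 < √(gmet Ψ φ q) := Real.sqrt_pos.2 hg
  rw [guub, gubub, invSqrtg]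
  field_simp
  rw [Real.sq_sqrt hg.le]
  ring

theorem boxG_eq_invSqrtg_mul (hg : ∀ q, 0 < gmet Ψ φ q) (p : ℝ × ℝ) :
    BoxG Ψ φ p = invSqrtg Ψ φ p *
      (pd1 (fun q => (-pd2 φ q + deriv Ψ q.1 * pd2 φ q ^ 2) * invSqrtg Ψ φ q) p +
        pd2 (fun q => (-pd1 φ q - deriv Ψ q.1 * pd1 φ q * pd2 φ q) * invSqrtg Ψ φ q) p) := by
  simp only [BoxG, sqrt_gmet_mul_guu_add_guub (hg _), sqrt_gmet_mul_guub_add_gubub (hg _)]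

theorem hasDerivAt_gmet_fst (hφ : ContDiff ℝ 2 φ) (hΨ : ContDiff ℝ 2 Ψ) (x y : ℝ) :
    HasDerivAt (fun s => gmet Ψ φ (s, y))
      (-2 * (pd1 (pd1 φ) (x, y) * pd2 φ (x, y) + pd1 φ (x, y) * pd1 (pd2 φ) (x, y))
        - 2 * (deriv (deriv Ψ) x * pd2 φ (x, y) + deriv Ψ x * pd1 (pd2 φ) (x, y))
        + 2 * deriv Ψ x * deriv (deriv Ψ) x * pd2 φ (x, y) ^ 2
        + 2 * deriv Ψ x ^ 2 * pd2 φ (x, y) * pd1 (pd2 φ) (x, y)) x := by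
  have ha := hasDerivAt_pd1 (differentiable_pd1 hφ (x, y))
  have hb := hasDerivAt_pd1 (differentiable_pd2 hφ (x, y))
  have hψ : HasDerivAt (fun s => deriv Ψ s) _ x :=
    ((hΨ.deriv' (n := 1)).differentiable one_ne_zero x).hasDerivAt
  refine ((((hasDerivAt_const x 1).sub ((ha.const_mul 2).mul hb)).sub
    ((hψ.const_mul 2).mul hb)).add ((hψ.pow 2).mul (hb.pow 2))).congr_deriv ?_
  simp only [Pi.pow_apply]
  ring

theorem hasDerivAt_gmet_snd (hφ : ContDiff ℝ 2 φ) (x y : ℝ) :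
    HasDerivAt (fun t => gmet Ψ φ (x, t))
      (-2 * (pd2 (pd1 φ) (x, y) * pd2 φ (x, y) + pd1 φ (x, y) * pd2 (pd2 φ) (x, y))
        - 2 * deriv Ψ x * pd2 (pd2 φ) (x, y)
        + 2 * deriv Ψ x ^ 2 * pd2 φ (x, y) * pd2 (pd2 φ) (x, y)) y := by
  have ha := hasDerivAt_pd2 (differentiable_pd1 hφ (x, y))
  have hb := hasDerivAt_pd2 (differentiable_pd2 hφ (x, y))
  refine ((((hasDerivAt_const y 1).sub ((ha.const_mul 2).mul hb)).sub
    (hb.const_mul (2 * deriv Ψ x))).add ((hb.pow 2).const_mul (deriv Ψ x ^ 2))).congr_deriv ?_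
  ring

theorem boxG_add_gring_mul_invSqrtg_mul_ELexpr (hφ : ContDiff ℝ 2 φ) (hΨ : ContDiff ℝ 2 Ψ)
    (hg : ∀ q, 0 < gmet Ψ φ q) (p : ℝ × ℝ) :
    BoxG Ψ φ p + gring Ψ φ p * invSqrtg Ψ φ p * ELexpr Ψ φ p = S0expr Ψ φ p := by
  obtain ⟨x, y⟩ := p
  have ha₂ := hasDerivAt_pd2 (differentiable_pd1 hφ (x, y))
  have hb₁ := hasDerivAt_pd1 (differentiable_pd2 hφ (x, y))
  have hb₂ := hasDerivAt_pd2 (differentiable_pd2 hφ (x, y))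
  have hψ : HasDerivAt (fun s => deriv Ψ s) _ x :=
    ((hΨ.deriv' (n := 1)).differentiable one_ne_zero x).hasDerivAt
  have hI₁ := (hasDerivAt_gmet_fst hφ hΨ x y).sqrt_inv (hg (x, y))
  have hI₂ := (hasDerivAt_gmet_snd (Ψ := Ψ) hφ x y).sqrt_inv (hg (x, y))
  have hBox₁ : pd1 (fun q => (-pd2 φ q + deriv Ψ q.1 * pd2 φ q ^ 2) * invSqrtg Ψ φ q) (x, y)
      = _ :=
    ((hb₁.neg.add (hψ.mul (hb₁.pow 2))).mul hI₁).deriv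
  have hBox₂ : pd2 (fun q => (-pd1 φ q - deriv Ψ q.1 * pd1 φ q * pd2 φ q) * invSqrtg Ψ φ q) (x, y)
      = _ :=
    ((ha₂.neg.sub ((ha₂.const_mul (deriv Ψ x)).mul hb₂)).mul hI₂).deriv
  have hEL₁ : pd1 (fun q => pd2 φ q * invSqrtg Ψ φ q) (x, y) = _ := (hb₁.mul hI₁).deriv
  have hEL₂ : pd2 (fun q => (pd1 φ q + deriv Ψ q.1 - deriv Ψ q.1 ^ 2 * pd2 φ q) *
      invSqrtg Ψ φ q) (x, y) = _ :=
    (((ha₂.add_const (deriv Ψ x)).sub (hb₂.const_mul (deriv Ψ x ^ 2))).mul hI₂).deriv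
  have hIu : pd1 (invSqrtg Ψ φ) (x, y) = _ := hI₁.deriv
  have hIv : pd2 (invSqrtg Ψ φ) (x, y) = _ := hI₂.deriv
  rw [boxG_eq_invSqrtg_mul hg, ELexpr, S0expr, gring, hBox₁, hBox₂, hEL₁, hEL₂, hIu, hIv,
    pd2_pd1_comm hφ, invSqrtg]
  have hs : 0 < √(gmet Ψ φ (x, y)) := Real.sqrt_pos.2 (hg (x, y))
  have hgs := (Real.sq_sqrt (hg (x, y)).le).symm
  -- writing `g = (√g)²` makes the goal a rational identity in the atom `√g`
  set s := √(gmet Ψ φ (x, y))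
  rw [hgs]
  simp only [Pi.add_apply, Pi.sub_apply, Pi.neg_apply, Pi.mul_apply, Pi.pow_apply]
  field_simp
  ring

end Metric

theorem euler_lagrange_geometric_wave_form_general
    (Ψ : ℝ → ℝ) (φ : ℝ × ℝ → ℝ)
    (hΨ : ContDiff ℝ (⊤ : ℕ∞) Ψ) (hφ : ContDiff ℝ (⊤ : ℕ∞) φ)
    (hg : ∀ p : ℝ × ℝ, 0 < gmet Ψ φ p)
    (hEL : ∀ p : ℝ × ℝ, ELexpr Ψ φ p = 0) :
    ∀ p : ℝ × ℝ, BoxG Ψ φ p = S0expr Ψ φ p := by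
  intro p
  have h2 : (2 : WithTop ℕ∞) ≤ ((⊤ : ℕ∞) : WithTop ℕ∞) := ENat.LEInfty.out
  rw [← boxG_add_gring_mul_invSqrtg_mul_ELexpr (hφ.of_le h2) (hΨ.of_le h2) hg p, hEL p, mul_zero,
    add_zero]

/-- **Reformulation of the Euler–Lagrange equation as a geometric wave equation
(Proposition 2.1).**  If `φ` is smooth with `g > 0`, `g̊ > 0` everywhere and satisfies
the Euler–Lagrange equation, then `□_g φ = S₀` at every point. -/
theorem euler_lagrange_geometric_wave_form
    (Ψ : ℝ → ℝ) (φ : ℝ × ℝ → ℝ)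
    (hΨ : ContDiff ℝ (⊤ : ℕ∞) Ψ) (hφ : ContDiff ℝ (⊤ : ℕ∞) φ)
    (hg : ∀ p : ℝ × ℝ, 0 < gmet Ψ φ p) (hgr : ∀ p : ℝ × ℝ, 0 < gring Ψ φ p)
    (hEL : ∀ p : ℝ × ℝ, ELexpr Ψ φ p = 0) :
    ∀ p : ℝ × ℝ, BoxG Ψ φ p = S0expr Ψ φ p :=
  euler_lagrange_geometric_wave_form_general Ψ φ hΨ hφ hg hEL
end
end

section
/- Quadratic-form formulas and positivity for the energy–momentum tensor (core of Lemma 3.3). Let a, b, c, p, q be real numbers (in the application a = g^{uu}, b = g^{uū}, c = g^{ūū}, p = ∂_uψ, q = ∂_ūψ, so that the three quantities below are the contractions T[ψ](Dū,Dū), T[ψ](Du,Du) and T[ψ](Du,Dū)). Set Q := a·p² + 2·b·p·q + c·q². Then: (i) (c·q + b·p)² − (1/2)·c·Q = b²p² + (1/2)·c²q² + bc·pq − (1/2)·ac·p²; (ii) (a·p + b·q)² − (1/2)·a·Q = b²q² + (1/2)·a²p² + ab·pq − (1/2)·ac·q²; (iii) (a·p + b·q)·(b·p + c·q) − (1/2)·b·Q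 = (1/2)·ab·p² + (1/2)·bc·q² + ac·p·q. Moreover, if |a·c| ≤ b²/6, then (c·q + b·p)² − (1/2)·c·Q ≥ (1/6)·(b²p² + c²q²) and (a·p + b·q)² − (1/2)·a·Q ≥ (1/6)·(b²q² + a²p²). -/
/-! The three identities are polynomial identities. For the lower bounds, the excess of
`T(Dū,Dū)` over `(b²p² + c²q²)/6` is the sum of squares `(3bp + 2cq)²/12 + (b²/6 − ac)p²/2`,
which is nonnegative as soon as `ac ≤ b²/6`; `T(Du,Du)` is the same form with `(a, p)` and
`(c, q)` exchanged. -/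

theorem sq_sub_half_mul_quadratic_eq (a b c p q : ℝ) :
    (c*q + b*p)^2 - (1/2)*c*(a*p^2 + 2*b*p*q + c*q^2)
      = (1/6)*(b^2*p^2 + c^2*q^2) + (1/12)*(3*b*p + 2*c*q)^2 + (1/2)*(b^2/6 - a*c)*p^2 := by
  ring

theorem le_sq_sub_half_mul_quadratic {a b c : ℝ} (h : a * c ≤ b ^ 2 / 6) (p q : ℝ) :
    (1/6)*(b^2*p^2 + c^2*q^2) ≤ (c*q + b*p)^2 - (1/2)*c*(a*p^2 + 2*b*p*q + c*q^2) := by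
  rw [sq_sub_half_mul_quadratic_eq]
  have hsq : 0 ≤ (1/12)*(3*b*p + 2*c*q)^2 := by positivity
  have hgap : 0 ≤ (1/2)*(b^2/6 - a*c)*p^2 :=
    mul_nonneg (mul_nonneg (by norm_num) (sub_nonneg.mpr h)) (sq_nonneg p)
  linarith

/-- **Quadratic-form formulas and positivity for the energy–momentum tensor**
(core of Lemma 3.3).  With `a = g^{uu}`, `b = g^{uū}`, `c = g^{ūū}`, `p = ∂_uψ`, `q = ∂_ūψ`
and `Q = a·p² + 2·b·p·q + c·q²`, the three contractions `T[ψ](Dū,Dū)`, `T[ψ](Du,Du)`,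
`T[ψ](Du,Dū)` have the stated expansions, and under `|a·c| ≤ b²/6` the first two are bounded
below by `(1/6)·(b²p² + c²q²)` and `(1/6)·(b²q² + a²p²)` respectively. -/
theorem energy_momentum_quadratic_forms (a b c p q : ℝ) :
    ((c*q + b*p)^2 - (1/2)*c*(a*p^2 + 2*b*p*q + c*q^2)
        = b^2*p^2 + (1/2)*c^2*q^2 + b*c*p*q - (1/2)*a*c*p^2) ∧
    ((a*p + b*q)^2 - (1/2)*a*(a*p^2 + 2*b*p*q + c*q^2)
        = b^2*q^2 + (1/2)*a^2*p^2 + a*b*p*q - (1/2)*a*c*q^2) ∧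
    ((a*p + b*q)*(b*p + c*q) - (1/2)*b*(a*p^2 + 2*b*p*q + c*q^2)
        = (1/2)*a*b*p^2 + (1/2)*b*c*q^2 + a*c*p*q) ∧
    (|a*c| ≤ b^2/6 →
      ((1/6)*(b^2*p^2 + c^2*q^2) ≤ (c*q + b*p)^2 - (1/2)*c*(a*p^2 + 2*b*p*q + c*q^2)) ∧
      ((1/6)*(b^2*q^2 + a^2*p^2) ≤ (a*p + b*q)^2 - (1/2)*a*(a*p^2 + 2*b*p*q + c*q^2))) := by
  refine ⟨by ring, by ring, by ring, fun h => ?_⟩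
  have hac : a * c ≤ b ^ 2 / 6 := (le_abs_self _).trans h
  have hca : c * a ≤ b ^ 2 / 6 := mul_comm a c ▸ hac
  refine ⟨le_sq_sub_half_mul_quadratic hac p q, ?_⟩
  convert le_sq_sub_half_mul_quadratic hca q p using 1; ring
end
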